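/- In the monoid M′₆ presented by generators a, b, c, d, e, f and relations abf = bfa = fab, bcd = cdb = dbc, def = efd = fde, ad = da, cf = fc, be = eb, abce = eabc, cdea = acde, the equality d·b·c·e·f·a = d·b·e·f·a·c holds, but c·e·f·a ≠ e·f·a·c; consequently M′₆ is not cancellative. -/

import Mathlib

/-- The six generators of the monoid `M′₆`. -/
inductive L6 : Type
  | a | b | c | d | e | f

open FreeMonoid

/-- The defining relations of `M′₆`:
`abf = bfa = fab`, `bcd = cdb = dbc`, `def = efd = fde`,
`ad = da`, `cf = fc`, `be = eb`, `abce = eabc`, `cdea = acde`. -/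
inductive R6' : FreeMonoid L6 → FreeMonoid L6 → Prop
  | abf₁ : R6' (of L6.a * of L6.b * of L6.f) (of L6.b * of L6.f * of L6.a)
  | abf₂ : R6' (of L6.a * of L6.b * of L6.f) (of L6.f * of L6.a * of L6.b)
  | bcd₁ : R6' (of L6.b * of L6.c * of L6.d) (of L6.c * of L6.d * of L6.b)
  | bcd₂ : R6' (of L6.b * of L6.c * of L6.d) (of L6.d * of L6.b * of L6.c)
  | def₁ : R6' (of L6.d * of L6.e * of L6.f) (of L6.e * of L6.f * of L6.d)
  | def₂ : R6' (of L6.d * of L6.e * of L6.f) (of L6.f * of L6.d * of L6.e)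
  | ad : R6' (of L6.a * of L6.d) (of L6.d * of L6.a)
  | cf : R6' (of L6.c * of L6.f) (of L6.f * of L6.c)
  | be : R6' (of L6.b * of L6.e) (of L6.e * of L6.b)
  | abce : R6' (of L6.a * of L6.b * of L6.c * of L6.e)
      (of L6.e * of L6.a * of L6.b * of L6.c)
  | cdea : R6' (of L6.c * of L6.d * of L6.e * of L6.a)
      (of L6.a * of L6.c * of L6.d * of L6.e)

/-- The monoid `M′₆` presented by the generators `a, …, f` and the relations `R6'`. -/
abbrev M6' : Type := PresentedMonoid R6'

/-- The image of a generator in `M′₆`. -/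
def g (x : L6) : M6' := PresentedMonoid.of R6' x

/-! The equality `d·b·c·e·f·a = d·b·e·f·a·c` is a chain of thirteen applications of single
defining relations. The inequality `c·e·f·a ≠ e·f·a·c` is detected by letting `M′₆` act on a
three-point set: `e` and `f` act trivially, `a`, `b`, `d` as one map `x` and `c` as a map `y`,
where `x·x` and `x·y·x` are the constant map `0`. All defining relations then hold, while
`y·x ≠ x·y`. -/

theorem PresentedMonoid.mk_mul_mul_eq_of_rel {α : Type*}
    {rels : FreeMonoid α → FreeMonoid α → Prop} {x y : FreeMonoid α} (h : rels x y)
    (u v : FreeMonoid α) :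
    PresentedMonoid.mk rels (u * x * v) = PresentedMonoid.mk rels (u * y * v) := by
  simp only [map_mul, PresentedMonoid.mk_eq_mk_of_rel h]

theorem not_forall_mul_mul_cancel_of_mul_eq_mul {M : Type*} [Monoid M] {p x y : M}
    (h : p * x = p * y) (hne : x ≠ y) : ¬ ∀ A X Y B : M, A * X * B = A * Y * B → X = Y :=
  fun H => hne (H p x y 1 (by simpa only [mul_one] using h))

namespace M6'

open L6

def word (w : List L6) : M6' := PresentedMonoid.mk R6' (FreeMonoid.ofList w)

theorem word_congr {x y : FreeMonoid L6} (h : R6' x y) (u v : List L6) :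
    word (u ++ x.toList ++ v) = word (u ++ y.toList ++ v) :=
  PresentedMonoid.mk_mul_mul_eq_of_rel h (.ofList u) (.ofList v)

theorem dbcefa_eq_dbefac :
    g d * g b * g c * g e * g f * g a = g d * g b * g e * g f * g a * g c :=
  -- both sides are definitionally `word`s, since `PresentedMonoid.mk` multiplies on the nose
  calc word [d, b, c, e, f, a]
    _ = word [b, c, d, e, f, a] := (word_congr .bcd₂ [] [e, f, a]).symm
    _ = word [c, d, b, e, f, a] := word_congr .bcd₁ [] [e, f, a]
    _ = word [c, d, e, b, f, a] := word_congr .be [c, d] [f, a]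
    _ = word [c, d, e, a, b, f] := (word_congr .abf₁ [c, d, e] []).symm
    _ = word [a, c, d, e, b, f] := word_congr .cdea [] [b, f]
    _ = word [a, c, d, b, e, f] := (word_congr .be [a, c, d] [f]).symm
    _ = word [a, b, c, d, e, f] := (word_congr .bcd₁ [a] [e, f]).symm
    _ = word [a, d, b, c, e, f] := word_congr .bcd₂ [a] [e, f]
    _ = word [d, a, b, c, e, f] := word_congr .ad [] [b, c, e, f]
    _ = word [d, e, a, b, c, f] := word_congr .abce [d] [f]
    _ = word [d, e, a, b, f, c] := word_congr .cf [d, e, a, b] []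
    _ = word [d, e, b, f, a, c] := word_congr .abf₁ [d, e] [c]
    _ = word [d, b, e, f, a, c] := (word_congr .be [d] [f, a, c]).symm

def actOnFin3 : L6 → Function.End (Fin 3)
  | a | b | d => ![0, 0, 1]
  | c => ![0, 1, 0]
  | e | f => id

theorem actOnFin3_respects_rels (x y : FreeMonoid L6) (h : R6' x y) :
    FreeMonoid.lift actOnFin3 x = FreeMonoid.lift actOnFin3 y := by
  cases h <;> funext i <;> fin_cases i <;> rfl

def toEnd : M6' →* Function.End (Fin 3) := PresentedMonoid.lift actOnFin3 actOnFin3_respects_rels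

theorem cefa_ne_efac : g c * g e * g f * g a ≠ g e * g f * g a * g c := fun h =>
  absurd (congrArg (toEnd · 2) h) (by decide)

end M6'

/-- In `M′₆`, the equality `d·b·c·e·f·a = d·b·e·f·a·c` holds but `c·e·f·a ≠ e·f·a·c`;
consequently `M′₆` is not cancellative. -/
theorem M6'_not_cancellative :
    (g L6.d * g L6.b * g L6.c * g L6.e * g L6.f * g L6.a =
      g L6.d * g L6.b * g L6.e * g L6.f * g L6.a * g L6.c) ∧
    (g L6.c * g L6.e * g L6.f * g L6.a ≠ g L6.e * g L6.f * g L6.a * g L6.c) ∧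
    ¬ (∀ A X Y B : M6', A * X * B = A * Y * B → X = Y) :=
  ⟨M6'.dbcefa_eq_dbefac, M6'.cefa_ne_efac,
    not_forall_mul_mul_cancel_of_mul_eq_mul (p := g L6.d * g L6.b)
      (by simpa only [mul_assoc] using M6'.dbcefa_eq_dbefac) M6'.cefa_ne_efac⟩
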